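/- arXiv:1303.4547 — 3 statements merged into one kernel-verified Lean document; each statement's English description precedes it below -/
import Mathlib

section
/- Let T ⊆ [0,1) and μ a Borel probability measure on T. With A^(k)_i = [i·4^(-k),(i+1)·4^(-k)) ∩ T, one has ∫_T ∫₀¹ (μ(B(t,r²)))^(-1/2) dr dμ(t) ≤ Σ_{k=1}^∞ 2^(-k) Σ_{i=0}^{4^k-1} (μ(A^(k)_i))^(1/2). -/
open MeasureTheory ENNReal

/-! For `r ∈ (2^{-(k+1)}, 2^{-k}]` we have `r² > 4^{-(k+1)}`, so `B(t, r²)` contains the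
4-adic cell of length `4^{-(k+1)}` containing `t`; splitting `(0, 1]` into these dyadic ranges
bounds the inner integral by `∑ₖ 2^{-(k+1)} μ(cell)^{-1/2}`. Integrating over `T`, the cell `A`
contributes `μ(A) · μ(A)^{-1/2} ≤ μ(A)^{1/2}`. -/

namespace ENNReal

lemma rpow_neg_half_antitone : Antitone fun a : ℝ≥0∞ => a ^ (-(1:ℝ)/2) := by
  intro a b hab
  simp only [neg_div, ENNReal.rpow_neg]
  exact ENNReal.inv_le_inv.mpr (ENNReal.rpow_le_rpow hab (by norm_num))

lemma rpow_neg_half_mul_self_le (a : ℝ≥0∞) : a ^ (-(1:ℝ)/2) * a ≤ a ^ ((1:ℝ)/2) := by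
  rcases eq_or_ne a 0 with rfl | h0
  · simp
  rcases eq_or_ne a ⊤ with rfl | htop
  · simp [ENNReal.top_rpow_of_neg (by norm_num : -(1:ℝ)/2 < 0)]
  refine le_of_eq ?_
  calc a ^ (-(1:ℝ)/2) * a = a ^ (-(1:ℝ)/2 + 1) := by rw [ENNReal.rpow_add _ _ h0 htop, rpow_one]
    _ = a ^ ((1:ℝ)/2) := by norm_num

end ENNReal

theorem MeasureTheory.lintegral_biUnion_finset_le {α β : Type*} [MeasurableSpace α] {μ : Measure α}
    (s : Finset β) (t : β → Set α) (f : α → ℝ≥0∞) :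
    ∫⁻ a in ⋃ b ∈ s, t b, f a ∂μ ≤ ∑ b ∈ s, ∫⁻ a in t b, f a ∂μ := by
  simp only [← Finset.mem_coe]
  calc ∫⁻ a in ⋃ b ∈ (s : Set β), t b, f a ∂μ
      ≤ ∫⁻ a, f a ∂Measure.sum fun b : (s : Set β) => μ.restrict (t b) :=
        lintegral_mono' (Measure.restrict_biUnion_le s.countable_toSet) le_rfl
    _ = ∑ b ∈ s, ∫⁻ a in t b, f a ∂μ := by
        rw [lintegral_sum_measure, Finset.tsum_subtype' s fun b => ∫⁻ a in t b, f a ∂μ]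

lemma Int.floor_mul_eq_iff {N t : ℝ} {i : ℤ} (hN : 0 < N) :
    ⌊t * N⌋ = i ↔ t ∈ Set.Ico (i * N⁻¹) ((i + 1) * N⁻¹) := by
  rw [Int.floor_eq_iff, Set.mem_Ico, mul_inv_le_iff₀ hN, lt_mul_inv_iff₀ hN]

lemma abs_sub_lt_inv_of_floor_mul_eq {N s t : ℝ} (hN : 0 < N) (h : ⌊s * N⌋ = ⌊t * N⌋) :
    |s - t| < N⁻¹ := by
  have := Int.abs_sub_lt_one_of_floor_eq_floor h
  rw [← sub_mul, abs_mul, abs_of_pos hN] at this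
  rwa [← one_div, lt_div_iff₀ hN]

lemma Ico_floor_mul_inter_subset {N ρ t : ℝ} (hN : 0 < N) (hρ : N⁻¹ ≤ ρ) (T : Set ℝ) :
    Set.Ico (⌊t * N⌋ * N⁻¹) ((⌊t * N⌋ + 1) * N⁻¹) ∩ T ⊆ {s | s ∈ T ∧ |s - t| ≤ ρ} :=
  fun _ ⟨hs, hsT⟩ =>
    ⟨hsT, (abs_sub_lt_inv_of_floor_mul_eq hN ((Int.floor_mul_eq_iff hN).mpr hs)).le.trans hρ⟩

lemma Ico_zero_one_subset_biUnion_Ico {n : ℕ} (hn : 0 < n) :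
    Set.Ico (0:ℝ) 1 ⊆ ⋃ i ∈ Finset.range n, Set.Ico (i * (n:ℝ)⁻¹) ((i + 1) * (n:ℝ)⁻¹) := by
  rintro t ⟨ht0, ht1⟩
  have hn' : (0:ℝ) < n := Nat.cast_pos.mpr hn
  have hfloor : ⌊t * n⌋₊ < n := (Nat.floor_lt (by positivity)).mpr (by nlinarith)
  refine Set.mem_biUnion (Finset.mem_range.mpr hfloor) ⟨?_, ?_⟩
  · rw [mul_inv_le_iff₀ hn']
    exact Nat.floor_le (by positivity)
  · rw [lt_mul_inv_iff₀ hn']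
    exact Nat.lt_floor_add_one _

lemma measurable_comp_floor_mul {β : Type*} [MeasurableSpace β] (g : ℤ → β) (N : ℝ) :
    Measurable fun t : ℝ => g ⌊t * N⌋ :=
  (measurable_of_countable g).comp (Int.measurable_floor.comp (measurable_id.mul_const N))

lemma Ioc_zero_one_subset_iUnion_Ioc_inv_two_pow :
    Set.Ioc (0:ℝ) 1 ⊆ ⋃ k : ℕ, Set.Ioc ((2:ℝ)⁻¹ ^ (k + 1)) ((2:ℝ)⁻¹ ^ k) := by
  rintro r ⟨hr0, hr1⟩
  obtain ⟨k, hk⟩ := exists_nat_pow_near_of_lt_one hr0 hr1 (by norm_num : (0:ℝ) < 2⁻¹) (by norm_num)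
  exact Set.mem_iUnion.mpr ⟨k, hk⟩

lemma volume_Ioc_inv_two_pow (k : ℕ) :
    volume (Set.Ioc ((2:ℝ)⁻¹ ^ (k + 1)) ((2:ℝ)⁻¹ ^ k)) = 2⁻¹ ^ (k + 1) := by
  rw [Real.volume_Ioc, show (2:ℝ)⁻¹ ^ k - 2⁻¹ ^ (k + 1) = 2⁻¹ ^ (k + 1) by ring,
    ENNReal.ofReal_pow (by norm_num), ENNReal.ofReal_inv_of_pos two_pos, ENNReal.ofReal_ofNat]

lemma setLIntegral_Ioc_zero_one_le_tsum {f : ℝ → ℝ≥0∞} {c : ℕ → ℝ≥0∞}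
    (hf : ∀ k, ∀ r ∈ Set.Ioc ((2:ℝ)⁻¹ ^ (k + 1)) ((2:ℝ)⁻¹ ^ k), f r ≤ c k) :
    ∫⁻ r in Set.Ioc (0:ℝ) 1, f r ≤ ∑' k : ℕ, 2⁻¹ ^ (k + 1) * c k :=
  calc ∫⁻ r in Set.Ioc (0:ℝ) 1, f r
      ≤ ∫⁻ r in ⋃ k : ℕ, Set.Ioc ((2:ℝ)⁻¹ ^ (k + 1)) ((2:ℝ)⁻¹ ^ k), f r :=
        lintegral_mono_set Ioc_zero_one_subset_iUnion_Ioc_inv_two_pow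
    _ ≤ ∑' k : ℕ, ∫⁻ r in Set.Ioc ((2:ℝ)⁻¹ ^ (k + 1)) ((2:ℝ)⁻¹ ^ k), f r :=
        lintegral_iUnion_le _ _
    _ ≤ ∑' k : ℕ, 2⁻¹ ^ (k + 1) * c k := ENNReal.tsum_le_tsum fun k => by
        grw [setLIntegral_mono' measurableSet_Ioc (hf k), setLIntegral_const,
          volume_Ioc_inv_two_pow, mul_comm]

lemma setLIntegral_le_sum_rpow_half {α ι : Type*} [MeasurableSpace α] {μ : Measure α}
    {T : Set α} {I : Finset ι} {s : ι → Set α} (hs : ∀ i, MeasurableSet (s i))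
    (hT : T ⊆ ⋃ i ∈ I, s i) {f : α → ℝ≥0∞}
    (hf : ∀ i ∈ I, ∀ t ∈ s i, f t ≤ μ (s i ∩ T) ^ (-(1:ℝ)/2)) :
    ∫⁻ t in T, f t ∂μ ≤ ∑ i ∈ I, μ (s i ∩ T) ^ ((1:ℝ)/2) :=
  calc ∫⁻ t in T, f t ∂μ = ∫⁻ t in ⋃ i ∈ I, s i, f t ∂μ.restrict T := by
        rw [Measure.restrict_restrict (Finset.measurableSet_biUnion I fun i _ => hs i),
          Set.inter_eq_right.mpr hT]
    _ ≤ ∑ i ∈ I, ∫⁻ t in s i, f t ∂μ.restrict T := lintegral_biUnion_finset_le I s f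
    _ ≤ ∑ i ∈ I, μ (s i ∩ T) ^ (-(1:ℝ)/2) * μ (s i ∩ T) := Finset.sum_le_sum fun i hi => by
        grw [setLIntegral_mono' (hs i) (hf i hi), setLIntegral_const,
          Measure.restrict_apply (hs i)]
    _ ≤ ∑ i ∈ I, μ (s i ∩ T) ^ ((1:ℝ)/2) :=
        Finset.sum_le_sum fun i _ => ENNReal.rpow_neg_half_mul_self_le _

theorem stmt2_general (T : Set ℝ) (hT : T ⊆ Set.Ico (0:ℝ) 1)
    (μ : Measure ℝ) :
    ∫⁻ t in T, (∫⁻ r in Set.Ioc (0:ℝ) 1, (μ {s | s ∈ T ∧ |s - t| ≤ r ^ 2}) ^ (-(1:ℝ)/2)) ∂μ ≤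
      ∑' k : ℕ, 2⁻¹ ^ (k + 1) *
        ∑ i ∈ Finset.range (4 ^ (k + 1)),
          (μ (Set.Ico ((i : ℝ) * ((4:ℝ) ^ (k + 1))⁻¹) (((i : ℝ) + 1) * ((4:ℝ) ^ (k + 1))⁻¹) ∩ T))
            ^ ((1:ℝ)/2) := by
  set N : ℕ → ℝ := fun k => (4:ℝ) ^ (k + 1) with hN
  have hNpos : ∀ k, 0 < N k := fun k => by positivity
  set w : ℕ → ℤ → ℝ≥0∞ := fun k i =>
    μ (Set.Ico (i * (N k)⁻¹) ((i + 1) * (N k)⁻¹) ∩ T) ^ (-(1:ℝ)/2) with hw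
  set c : ℕ → ℝ → ℝ≥0∞ := fun k t => w k ⌊t * N k⌋ with hc
  have hinner (t : ℝ) : ∫⁻ r in Set.Ioc (0:ℝ) 1, (μ {s | s ∈ T ∧ |s - t| ≤ r ^ 2}) ^ (-(1:ℝ)/2) ≤
      ∑' k : ℕ, 2⁻¹ ^ (k + 1) * c k t := by
    refine setLIntegral_Ioc_zero_one_le_tsum fun k r hr => ENNReal.rpow_neg_half_antitone <|
      measure_mono <| Ico_floor_mul_inter_subset (hNpos k) ?_ T
    calc (N k)⁻¹ = ((2:ℝ)⁻¹ ^ (k + 1)) ^ 2 := by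
          rw [hN, ← pow_mul, inv_pow, pow_mul', show (2:ℝ) ^ 2 = 4 by norm_num]
      _ ≤ r ^ 2 := pow_le_pow_left₀ (by positivity) hr.1.le 2
  have hlevel (k : ℕ) : ∫⁻ t in T, c k t ∂μ ≤ ∑ i ∈ Finset.range (4 ^ (k + 1)),
      μ (Set.Ico ((i : ℝ) * (N k)⁻¹) (((i : ℝ) + 1) * (N k)⁻¹) ∩ T) ^ ((1:ℝ)/2) := by
    refine setLIntegral_le_sum_rpow_half (fun i => measurableSet_Ico)
      (hT.trans ?_) fun i _ t ht => ?_
    · simpa [hN] using Ico_zero_one_subset_biUnion_Ico (n := 4 ^ (k + 1)) (by positivity)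
    · have hfloor : ⌊t * N k⌋ = i := (Int.floor_mul_eq_iff (hNpos k)).mpr (by simpa using ht)
      simp [hc, hw, hfloor]
  have hc_meas (k : ℕ) : Measurable (c k) := measurable_comp_floor_mul (w k) (N k)
  calc _ ≤ ∫⁻ t in T, ∑' k : ℕ, 2⁻¹ ^ (k + 1) * c k t ∂μ := lintegral_mono hinner
    _ = ∑' k : ℕ, 2⁻¹ ^ (k + 1) * ∫⁻ t in T, c k t ∂μ := by
        rw [lintegral_tsum fun k => ((hc_meas k).const_mul _).aemeasurable]
        exact tsum_congr fun k => lintegral_const_mul _ (hc_meas k)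
    _ ≤ _ := ENNReal.tsum_le_tsum fun k => by grw [hlevel k]

/-- Lemma 1 of the paper: the weakly majorizing measure functional is bounded by
`∑_{k≥1} 2^{-k} ∑_i (μ A^{(k)}_i)^{1/2}`. -/
theorem stmt2 (T : Set ℝ) (hT : T ⊆ Set.Ico (0:ℝ) 1) (hTne : T.Nonempty)
    (μ : Measure ℝ) [IsProbabilityMeasure μ] (hμT : μ T = 1) :
    ∫⁻ t in T, (∫⁻ r in Set.Ioc (0:ℝ) 1, (μ {s | s ∈ T ∧ |s - t| ≤ r ^ 2}) ^ (-(1:ℝ)/2)) ∂μ ≤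
      ∑' k : ℕ, 2⁻¹ ^ (k + 1) *
        ∑ i ∈ Finset.range (4 ^ (k + 1)),
          (μ (Set.Ico ((i : ℝ) * ((4:ℝ) ^ (k + 1))⁻¹) (((i : ℝ) + 1) * ((4:ℝ) ^ (k + 1))⁻¹) ∩ T))
            ^ ((1:ℝ)/2) :=
  stmt2_general T hT μ
end

section
/- Let a, b, c ≥ 0 with a + c ≤ b. Then a^(1/2)·1[a fails] + c^(1/2)·1[c fails] ≤ max{ (2^(1/2)/4)·b^(1/2), (2^(1/2)/8)·b^(1/2) + (a+c)^(1/2) }, where '1[x fails]' is 1 if x does not satisfy (1/32)·b ≤ x ≤ (1/2)·(a+c) and 0 otherwise. -/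
lemma small_sqrt (x b : ℝ) (h : x ≤ (1/32) * b) :
    Real.sqrt x ≤ Real.sqrt 2 / 8 * Real.sqrt b := by
  calc Real.sqrt x ≤ Real.sqrt ((1/32) * b) := Real.sqrt_le_sqrt h
    _ = Real.sqrt (1/32) * Real.sqrt b := Real.sqrt_mul (by norm_num) b
    _ = Real.sqrt 2 / 8 * Real.sqrt b := by
        congr 1
        rw [show (1/32 : ℝ) = 2 / 8 ^ 2 by norm_num, Real.sqrt_div' 2 (by norm_num),
          Real.sqrt_sq (by norm_num)]

/- Abstract form of inequalities (set3)/(set4): contributions of 'failing' indices are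
bounded by `max{(√2/4)√b, (√2/8)√b + √(a+c)}`. -/
open Classical in
theorem stmt5 (a b c : ℝ) (ha : 0 ≤ a) (hb : 0 ≤ b) (hc : 0 ≤ c) (hac : a + c ≤ b) :
    (if ¬((1/32) * b ≤ a ∧ a ≤ (1/2) * (a + c)) then Real.sqrt a else 0) +
    (if ¬((1/32) * b ≤ c ∧ c ≤ (1/2) * (a + c)) then Real.sqrt c else 0) ≤
      max ((Real.sqrt 2 / 4) * Real.sqrt b)
        ((Real.sqrt 2 / 8) * Real.sqrt b + Real.sqrt (a + c)) := by
  have hsb : 0 ≤ Real.sqrt 2 / 8 * Real.sqrt b := by positivity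
  have hsa : Real.sqrt a ≤ Real.sqrt (a + c) := Real.sqrt_le_sqrt (by linarith)
  have hsc : Real.sqrt c ≤ Real.sqrt (a + c) := Real.sqrt_le_sqrt (by linarith)
  have hsac : 0 ≤ Real.sqrt (a + c) := Real.sqrt_nonneg _
  split_ifs with h1 h2 h2
  · -- neither fails: 0 + 0
    refine le_max_of_le_right ?_
    linarith
  · -- only c fails: 0 + √c
    refine le_max_of_le_right ?_
    rcases not_and_or.mp h2 with hc1 | hc2
    · have Hc := small_sqrt c b (not_le.mp hc1).le
      linarith
    · linarith
  · -- only a fails: √a + 0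
    refine le_max_of_le_right ?_
    rcases not_and_or.mp h1 with ha1 | ha2
    · have Ha := small_sqrt a b (not_le.mp ha1).le
      linarith
    · linarith
  · -- both fail
    rcases not_and_or.mp h1 with ha1 | ha2
    · have Ha := small_sqrt a b (not_le.mp ha1).le
      rcases not_and_or.mp h2 with hc1 | hc2
      · have Hc := small_sqrt c b (not_le.mp hc1).le
        refine le_max_of_le_left ?_
        have : Real.sqrt 2 / 4 * Real.sqrt b
            = Real.sqrt 2 / 8 * Real.sqrt b + Real.sqrt 2 / 8 * Real.sqrt b := by ring
        linarith
      · refine le_max_of_le_right ?_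
        linarith
    · have ha2' := not_le.mp ha2
      rcases not_and_or.mp h2 with hc1 | hc2
      · have Hc := small_sqrt c b (not_le.mp hc1).le
        refine le_max_of_le_right ?_
        linarith
      · have hc2' := not_le.mp hc2
        linarith
end

section
/- Let T ⊆ [0,1), μ a Borel probability measure on T, A^(k)_i = [i·4^(-k),(i+1)·4^(-k)) ∩ T. Define I(k) to be the set of indices 4i+j (0 ≤ i < 4^(k-1), 0 ≤ j ≤ 3) such that (1/32)·μ(A^(k-1)_i) ≤ μ(A^(k)_{4i+j}) ≤ (1/2)·μ(A^(k)_{4i} ∪ A^(k)_{4i+2}) when j ∈ {0,2}, and (1/32)·μ(A^(k-1)_i) ≤ μ(A^(k)_{4i+j}) ≤ (1/2)·μ(A^(k)_{4i+1} ∪ A^(k)_{4i+3}) when j ∈ {1,3}. Then for each k ≥ 1, Σ_{i=0}^{4^k-1} (μ(A^(k)_i))^(1/2)·1[i ∉ I(k)] ≤ L·Σ_{i=0}^{4^(k-1)-1} (μ(A^(k-1)_i))^(1/2), where L = 2^(1/2)·(5/4). -/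
open MeasureTheory ENNReal

/-- The level-`k` cell `A^{(k)}_i = [i·4^{-k}, (i+1)·4^{-k}) ∩ T`. -/
def Acell (T : Set ℝ) (k i : ℕ) : Set ℝ :=
  Set.Ico ((i : ℝ) * ((4:ℝ) ^ k)⁻¹) (((i : ℝ) + 1) * ((4:ℝ) ^ k)⁻¹) ∩ T

/-- `n = 4i+j ∈ I(k)`: the measure of `A^{(k-1)}_i` is well distributed among the children. -/
def goodIdx (T : Set ℝ) (μ : Measure ℝ) (k n : ℕ) : Prop :=
  if n % 4 = 0 ∨ n % 4 = 2 then
    (1/32) * μ (Acell T (k-1) (n / 4)) ≤ μ (Acell T k n) ∧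
      μ (Acell T k n) ≤ (1/2) * μ (Acell T k (4 * (n / 4)) ∪ Acell T k (4 * (n / 4) + 2))
  else
    (1/32) * μ (Acell T (k-1) (n / 4)) ≤ μ (Acell T k n) ∧
      μ (Acell T k n) ≤ (1/2) * μ (Acell T k (4 * (n / 4) + 1) ∪ Acell T k (4 * (n / 4) + 3))

/-!
Fix a parent cell of mass `p` and let `e`, `o` be the masses of its two pairs of children
`{4i, 4i+2}` and `{4i+1, 4i+3}`; the cells are separated by measurable intervals, so
`e + o ≤ p` even though `T` need not be measurable. A child outside `I(k)` has mass below
`p/32` or more than half the mass of its pair, and at most one child of a pair can do the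
latter. So the bad children of a pair contribute at most `√e + √(p/32)`, and all four at most
`√e + √o + 2√(p/32) ≤ √2·√p + (√2/4)·√p = (5/4)·√2·√p`.
-/

theorem sum_range_mul_eq_sum_sum {M : Type*} [AddCommMonoid M] (f : ℕ → M) (m n : ℕ) :
    ∑ x ∈ Finset.range (m * n), f x = ∑ i ∈ Finset.range m, ∑ j ∈ Finset.range n, f (n * i + j) := by
  induction m with
  | zero => simp
  | succ m ih => rw [Nat.succ_mul, Finset.sum_range_add, ih, Finset.sum_range_succ, mul_comm]

namespace ENNReal

theorem rpow_half_add_rpow_half_le (x y : ℝ≥0∞) :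
    x ^ (1 / 2 : ℝ) + y ^ (1 / 2 : ℝ) ≤ (2 * (x + y)) ^ (1 / 2 : ℝ) := by
  have h := rpow_add_le_mul_rpow_add_rpow (x ^ (1 / 2 : ℝ)) (y ^ (1 / 2 : ℝ)) one_le_two
  simp only [← rpow_mul] at h
  norm_num at h
  rw [show (1 / 2 : ℝ) = 2⁻¹ by norm_num] at h ⊢
  rw [le_rpow_inv_iff two_pos]
  exact_mod_cast h

theorem two_rpow_half_add_two_mul_rpow_half :
    (2 : ℝ≥0∞) ^ (1 / 2 : ℝ) + 2 * (1 / 32 : ℝ≥0∞) ^ (1 / 2 : ℝ) = ENNReal.ofReal (√2 * (5 / 4)) := by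
  have h2 : (2 : ℝ≥0∞) ^ (1 / 2 : ℝ) = ENNReal.ofReal √2 := by
    rw [← ofReal_ofNat, ofReal_rpow_of_nonneg zero_le_two one_half_pos.le, Real.sqrt_eq_rpow]
  have h32 : (1 / 32 : ℝ≥0∞) ^ (1 / 2 : ℝ) = ENNReal.ofReal (√2 / 8) := by
    have hcast : (1 / 32 : ℝ≥0∞) = ENNReal.ofReal (1 / 32) := by
      rw [ofReal_div_of_pos (by norm_num)]; simp
    rw [hcast, ofReal_rpow_of_nonneg (by norm_num) one_half_pos.le, ← Real.sqrt_eq_rpow]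
    congr 1
    rw [Real.sqrt_eq_iff_mul_self_eq_of_pos (by positivity)]
    ring_nf
    norm_num
  rw [h2, h32, ← ofReal_ofNat 2, ← ofReal_mul zero_le_two, ← ofReal_add (by positivity) (by positivity)]
  ring_nf

theorem ite_rpow_half_add_ite_rpow_half_le {gA gB : Prop} [Decidable gA] [Decidable gB]
    {a b e q : ℝ≥0∞} (hab : a + b ≤ e)
    (hA : ¬gA → a < q ∨ 1 / 2 * e < a) (hB : ¬gB → b < q ∨ 1 / 2 * e < b) :
    (if gA then 0 else a ^ (1 / 2 : ℝ)) + (if gB then 0 else b ^ (1 / 2 : ℝ)) ≤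
      e ^ (1 / 2 : ℝ) + q ^ (1 / 2 : ℝ) := by
  have hsqrt : Monotone fun x : ℝ≥0∞ => x ^ (1 / 2 : ℝ) := monotone_rpow_of_nonneg one_half_pos.le
  have hae : a ≤ e := le_self_add.trans hab
  have hbe : b ≤ e := le_add_self.trans hab
  split_ifs with hgA hgB hgB
  · simp
  · exact (zero_add _).trans_le ((hsqrt hbe).trans le_self_add)
  · exact (add_zero _).trans_le ((hsqrt hae).trans le_self_add)
  · -- two children with more than half of their pair's mass would together exceed it
    have hsmall : a < q ∨ b < q := by
      by_contra! h
      have := ENNReal.add_lt_add ((hA hgA).resolve_left h.1.not_gt)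
        ((hB hgB).resolve_left h.2.not_gt)
      rw [← add_mul, ENNReal.add_halves, one_mul] at this
      exact this.not_ge hab
    rcases hsmall with ha | hb
    · rw [add_comm (e ^ _)]
      exact add_le_add (hsqrt ha.le) (hsqrt hbe)
    · exact add_le_add (hsqrt hae) (hsqrt hb.le)

theorem add_le_of_le_rpow_half_add_rpow_half {e o p tE tO : ℝ≥0∞} (heo : e + o ≤ p)
    (hE : tE ≤ e ^ (1 / 2 : ℝ) + (1 / 32 * p) ^ (1 / 2 : ℝ))
    (hO : tO ≤ o ^ (1 / 2 : ℝ) + (1 / 32 * p) ^ (1 / 2 : ℝ)) :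
    tE + tO ≤ ENNReal.ofReal (√2 * (5 / 4)) * p ^ (1 / 2 : ℝ) := by
  calc tE + tO ≤ (e ^ (1 / 2 : ℝ) + o ^ (1 / 2 : ℝ)) + 2 * (1 / 32 * p) ^ (1 / 2 : ℝ) := by
        rw [two_mul, add_add_add_comm]; exact add_le_add hE hO
    _ ≤ (2 * p) ^ (1 / 2 : ℝ) + 2 * (1 / 32 * p) ^ (1 / 2 : ℝ) := by
        gcongr
        exact (rpow_half_add_rpow_half_le e o).trans (by gcongr)
    _ = ((2 : ℝ≥0∞) ^ (1 / 2 : ℝ) + 2 * (1 / 32 : ℝ≥0∞) ^ (1 / 2 : ℝ)) * p ^ (1 / 2 : ℝ) := by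
        rw [mul_rpow_of_nonneg _ _ one_half_pos.le, mul_rpow_of_nonneg _ _ one_half_pos.le]
        ring
    _ = _ := by rw [two_rpow_half_add_two_mul_rpow_half]

end ENNReal

theorem MeasureTheory.measure_add_le_of_subset_of_disjoint {α : Type*} [MeasurableSpace α]
    (μ : Measure α) {A B P S : Set α} (hS : MeasurableSet S) (hAS : A ⊆ S) (hBS : Disjoint B S)
    (hAP : A ⊆ P) (hBP : B ⊆ P) : μ A + μ B ≤ μ P :=
  calc μ A + μ B ≤ μ (P ∩ S) + μ (P \ S) :=
        add_le_add (measure_mono (Set.subset_inter hAP hAS))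
          (measure_mono (Set.subset_sdiff.mpr ⟨hBP, hBS⟩))
    _ = μ P := measure_inter_add_sdiff P hS

def fourAdicIco (k n : ℕ) : Set ℝ :=
  Set.Ico ((n : ℝ) * ((4 : ℝ) ^ k)⁻¹) (((n : ℝ) + 1) * ((4 : ℝ) ^ k)⁻¹)

theorem disjoint_fourAdicIco {k n m : ℕ} (h : n ≠ m) :
    Disjoint (fourAdicIco k n) (fourAdicIco k m) := by
  have := Set.pairwise_disjoint_Ico_add_zsmul (0 : ℝ) ((4 : ℝ) ^ k)⁻¹ (Int.natCast_inj.not.mpr h)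
  simpa [fourAdicIco, Function.onFun, zsmul_eq_mul] using this

theorem fourAdicIco_succ_subset (k i : ℕ) {j : ℕ} (hj : j < 4) :
    fourAdicIco (k + 1) (4 * i + j) ⊆ fourAdicIco k i := by
  have hj' : (j : ℝ) + 1 ≤ 4 := by exact_mod_cast hj
  have ht : (0 : ℝ) < ((4 : ℝ) ^ k)⁻¹ := by positivity
  apply Set.Ico_subset_Ico <;>
  · rw [pow_succ, mul_inv]; push_cast; nlinarith

section Cells

variable (T : Set ℝ) (μ : Measure ℝ)

theorem measure_Acell_add_measure_Acell_le {k a b : ℕ} (hab : a ≠ b) :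
    μ (Acell T k a) + μ (Acell T k b) ≤ μ (Acell T k a ∪ Acell T k b) :=
  measure_add_le_of_subset_of_disjoint μ measurableSet_Ico Set.inter_subset_left
    ((disjoint_fourAdicIco hab.symm).mono_left Set.inter_subset_left)
    Set.subset_union_left Set.subset_union_right

theorem measure_Acell_pairs_le (k i : ℕ) :
    μ (Acell T (k + 1) (4 * i) ∪ Acell T (k + 1) (4 * i + 2)) +
        μ (Acell T (k + 1) (4 * i + 1) ∪ Acell T (k + 1) (4 * i + 3)) ≤
      μ (Acell T k i) := by
  have hchild : ∀ j < 4, Acell T (k + 1) (4 * i + j) ⊆ Acell T k i := fun j hj =>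
    Set.inter_subset_inter_left T (fourAdicIco_succ_subset k i hj)
  refine measure_add_le_of_subset_of_disjoint μ
    (measurableSet_Ico.union measurableSet_Ico : MeasurableSet
      (fourAdicIco (k + 1) (4 * i) ∪ fourAdicIco (k + 1) (4 * i + 2)))
    (Set.union_subset_union Set.inter_subset_left Set.inter_subset_left) ?_
    (Set.union_subset (hchild 0 (by norm_num)) (hchild 2 (by norm_num)))
    (Set.union_subset (hchild 1 (by norm_num)) (hchild 3 (by norm_num)))
  simp only [Set.disjoint_union_left, Set.disjoint_union_right]
  refine ⟨⟨?_, ?_⟩, ?_, ?_⟩ <;>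
  · exact (disjoint_fourAdicIco (by omega)).mono_left Set.inter_subset_left

theorem not_goodIdx_iff {k i j l : ℕ} (hj : j < 2) (hl : l = j ∨ l = j + 2) :
    ¬goodIdx T μ (k + 1) (4 * i + l) ↔
      μ (Acell T (k + 1) (4 * i + l)) < 1 / 32 * μ (Acell T k i) ∨
        1 / 2 * μ (Acell T (k + 1) (4 * i + j) ∪ Acell T (k + 1) (4 * i + j + 2)) <
          μ (Acell T (k + 1) (4 * i + l)) := by
  have hdiv : (4 * i + l) / 4 = i := by omega
  interval_cases j <;> rcases hl with rfl | rfl <;>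
    simp [goodIdx, hdiv, imp_iff_not_or, add_assoc]

open Classical in
theorem sum_children_le (k i : ℕ) :
    ∑ j ∈ Finset.range 4, (if goodIdx T μ (k + 1) (4 * i + j) then 0
        else μ (Acell T (k + 1) (4 * i + j)) ^ ((1 : ℝ) / 2)) ≤
      ENNReal.ofReal (√2 * (5 / 4)) * μ (Acell T k i) ^ ((1 : ℝ) / 2) := by
  have hpair : ∀ j < 2,
      (if goodIdx T μ (k + 1) (4 * i + j) then 0
          else μ (Acell T (k + 1) (4 * i + j)) ^ ((1 : ℝ) / 2)) +
        (if goodIdx T μ (k + 1) (4 * i + (j + 2)) then 0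
          else μ (Acell T (k + 1) (4 * i + (j + 2))) ^ ((1 : ℝ) / 2)) ≤
      μ (Acell T (k + 1) (4 * i + j) ∪ Acell T (k + 1) (4 * i + j + 2)) ^ ((1 : ℝ) / 2) +
        (1 / 32 * μ (Acell T k i)) ^ ((1 : ℝ) / 2) := fun j hj =>
    ENNReal.ite_rpow_half_add_ite_rpow_half_le
      (measure_Acell_add_measure_Acell_le T μ (by omega))
      (not_goodIdx_iff T μ hj (Or.inl rfl)).mp (not_goodIdx_iff T μ hj (Or.inr rfl)).mp
  simp only [Finset.sum_range_succ, Finset.sum_range_zero, zero_add]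
  convert ENNReal.add_le_of_le_rpow_half_add_rpow_half (measure_Acell_pairs_le T μ k i)
    (hpair 0 two_pos) (hpair 1 one_lt_two) using 1
  simp only [add_zero, Nat.reduceAdd]
  ring

open Classical in
theorem stmt7_general (T : Set ℝ) (μ : Measure ℝ) (k : ℕ) (hk : 1 ≤ k) :
    ∑ n ∈ Finset.range (4 ^ k),
        (if goodIdx T μ k n then 0 else (μ (Acell T k n)) ^ ((1:ℝ)/2)) ≤
      ENNReal.ofReal (Real.sqrt 2 * (5/4)) *
        ∑ i ∈ Finset.range (4 ^ (k - 1)), (μ (Acell T (k-1) i)) ^ ((1:ℝ)/2) := by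
  obtain ⟨k, rfl⟩ := Nat.exists_eq_add_of_le' hk
  rw [Nat.add_sub_cancel, pow_succ, sum_range_mul_eq_sum_sum, Finset.mul_sum]
  exact Finset.sum_le_sum fun i _ => sum_children_le T μ k i

open Classical in
theorem stmt7 (T : Set ℝ) (hT : T ⊆ Set.Ico (0:ℝ) 1) (hTne : T.Nonempty)
    (μ : Measure ℝ) [IsProbabilityMeasure μ] (hμT : μ T = 1)
    (k : ℕ) (hk : 1 ≤ k) :
    ∑ n ∈ Finset.range (4 ^ k),
        (if goodIdx T μ k n then 0 else (μ (Acell T k n)) ^ ((1:ℝ)/2)) ≤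
      ENNReal.ofReal (Real.sqrt 2 * (5/4)) *
        ∑ i ∈ Finset.range (4 ^ (k - 1)), (μ (Acell T (k-1) i)) ^ ((1:ℝ)/2) :=
  stmt7_general T μ k hk
end Cells
end
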